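/- arXiv:1306.4458 — 2 statements merged into one kernel-verified Lean document; each statement's English description precedes it below -/
import Mathlib

section
/- Let n ≥ 1 and let μ be a nonzero finite Borel measure on the unit sphere S^n ⊂ ℝ^{n+1} which is atomless (μ({x}) = 0 for every point x ∈ S^n). Then there exists a point a in the open unit ball of ℝ^{n+1} such that the vector-valued integral ∫_{S^n} T_a(x) dμ(x) equals 0 ∈ ℝ^{n+1}. -/
open scoped RealInnerProductSpace

/-- The Möbius transformation `T_a` of the unit sphere of `ℝ^{n+1}`, associated to a point
`a` of the open unit ball:
`T_a(x) = ((1-‖a‖²)·x + 2(1+⟨x,a⟩)·a) / ‖x+a‖²`. -/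
noncomputable def mobius {n : ℕ} (a x : EuclideanSpace ℝ (Fin (n + 1))) :
    EuclideanSpace ℝ (Fin (n + 1)) :=
  (‖x + a‖ ^ 2)⁻¹ • ((1 - ‖a‖ ^ 2) • x + (2 * (1 + ⟪x, a⟫)) • a)

/-!
`T_a` is conformal on the sphere with conformal factor `(1 - ‖a‖²) / ‖x + a‖²` at `x`, and the
gradient in `a` of minus the log of this factor is `(2 / (1 - ‖a‖²)) • T_a(x)`. Balancing points are
therefore the critical points of the energy `a ↦ ∫ log (‖x + a‖² / (1 - ‖a‖²)) dμ(x)` on the open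
ball. This energy tends to `+∞` at every boundary point `b`: having no atom at `-b`, `μ` gives mass
at most `μ(S)/4` to a small cap around `-b`, so `∫ log ‖x + a‖² dμ` is bounded below by
`(μ(S)/2) log (1 - ‖a‖)` up to a constant, which loses against `-μ(S) log (1 - ‖a‖²)`. Hence the
energy has an interior minimum.
-/

open MeasureTheory Metric Filter Topology Set
open scoped ENNReal

theorem IsOpen.exists_isLocalMin_of_tendsto_atTop {X β : Type*} [TopologicalSpace X]
    [LinearOrder β] [TopologicalSpace β] [ClosedIicTopology β] [NoMaxOrder β]
    {s : Set X} {f : X → β} (hs : IsOpen s) (hsc : IsCompact (closure s)) (hne : s.Nonempty)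
    (hf : ContinuousOn f s) (hfr : ∀ b ∈ frontier s, Tendsto f (𝓝[s] b) atTop) :
    ∃ a ∈ s, IsLocalMin f a := by
  obtain ⟨x₀, hx₀⟩ := hne
  have hnear : ∀ᶠ a in 𝓝ˢ (frontier s), a ∈ s → f x₀ < f a :=
    eventually_nhdsSet_iff_forall.2 fun b hb =>
      eventually_nhdsWithin_iff.1 ((hfr b hb).eventually_gt_atTop (f x₀))
  obtain ⟨U, hUo, hfrU, hUf⟩ := mem_nhdsSet_iff_exists.1 hnear
  have hKs : closure s \ U ⊆ s := fun a ha => by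
    by_contra has
    exact ha.2 (hfrU ⟨ha.1, by rwa [hs.interior_eq]⟩)
  have hx₀K : x₀ ∈ closure s \ U := ⟨subset_closure hx₀, fun hx₀U => lt_irrefl _ (hUf hx₀U hx₀)⟩
  obtain ⟨a, haK, hmin⟩ := (hsc.diff hUo).exists_isMinOn ⟨x₀, hx₀K⟩ (hf.mono hKs)
  refine ⟨a, hKs haK, IsMinOn.isLocalMin (s := s) (fun y hy => ?_) (hs.mem_nhds (hKs haK))⟩
  by_cases hyU : y ∈ U
  · exact ((hmin hx₀K).trans_lt (hUf hyU hy)).le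
  · exact hmin ⟨subset_closure hy, hyU⟩

theorem exists_measure_closedBall_lt {X : Type*} [MetricSpace X] [MeasurableSpace X]
    [OpensMeasurableSpace X] (μ : Measure X) [IsFiniteMeasure μ] {y : X} (hy : μ {y} = 0)
    {ε : ℝ≥0∞} (hε : 0 < ε) : ∃ ρ > 0, μ (closedBall y ρ) < ε := by
  have hlim : Tendsto (fun r => μ (cthickening r {y})) (𝓝 0) (𝓝 (μ {y})) :=
    tendsto_measure_cthickening_of_isClosed ⟨1, one_pos, measure_ne_top μ _⟩ isClosed_singleton
  rw [hy] at hlim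
  obtain ⟨ρ, hlt, hρ⟩ := (((hlim.mono_left (nhdsWithin_le_nhds (s := Ioi 0))).eventually_lt_const
    hε).and self_mem_nhdsWithin).exists
  exact ⟨ρ, hρ, by rwa [← cthickening_singleton y (le_of_lt hρ)]⟩

section NormedGroup

variable {E : Type*} [SeminormedAddCommGroup E]

theorem one_sub_norm_le_norm_add {x : E} (hx : ‖x‖ = 1) (a : E) : 1 - ‖a‖ ≤ ‖x + a‖ :=
  hx ▸ norm_sub_le_norm_add x a

theorem norm_add_pos_of_norm_eq_one {x a : E} (hx : ‖x‖ = 1) (ha : ‖a‖ < 1) : 0 < ‖x + a‖ := by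
  linarith [one_sub_norm_le_norm_add hx a]

theorem one_sub_norm_sq_pos {a : E} (ha : ‖a‖ < 1) : 0 < 1 - ‖a‖ ^ 2 := by
  nlinarith [norm_nonneg a]

noncomputable def mobiusPotential (a x : E) : ℝ :=
  Real.log (‖x + a‖ ^ 2) - Real.log (1 - ‖a‖ ^ 2)

theorem two_mul_log_sub_le_mobiusPotential {a x : E} {c : ℝ} (hc : 0 < c) (hcx : c ≤ ‖x + a‖) :
    2 * Real.log c - Real.log (1 - ‖a‖ ^ 2) ≤ mobiusPotential a x := by
  rw [mobiusPotential, Real.log_pow, Nat.cast_ofNat]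
  linarith [Real.log_le_log hc hcx]

theorem continuous_mobiusPotential {a : E} (ha : ‖a‖ < 1) :
    Continuous fun x : sphere (0 : E) 1 => mobiusPotential a (x : E) :=
  ((continuous_subtype_val.add continuous_const).norm.pow 2 |>.log fun x =>
    (pow_pos (norm_add_pos_of_norm_eq_one (norm_eq_of_mem_sphere x) ha) 2).ne').sub
    continuous_const

end NormedGroup

section NormedSpace

variable {E : Type*} [SeminormedAddCommGroup E] [NormedSpace ℝ E]

noncomputable def mobiusPotentialGrad (a x : E) : E :=
  (2 / ‖x + a‖ ^ 2) • (x + a) + (2 / (1 - ‖a‖ ^ 2)) • a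

theorem continuous_mobiusPotentialGrad {a : E} (ha : ‖a‖ < 1) :
    Continuous fun x : sphere (0 : E) 1 => mobiusPotentialGrad a (x : E) := by
  have hxa : Continuous fun x : sphere (0 : E) 1 => (x : E) + a :=
    continuous_subtype_val.add continuous_const
  exact ((continuous_const.div (hxa.norm.pow 2) fun x =>
    (pow_pos (norm_add_pos_of_norm_eq_one (norm_eq_of_mem_sphere x) ha) 2).ne').smul hxa).add
    continuous_const

theorem norm_mobiusPotentialGrad_le {x a : E} (hx : ‖x‖ = 1) {r : ℝ} (har : ‖a‖ ≤ r) (hr : r < 1) :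
    ‖mobiusPotentialGrad a x‖ ≤ 4 / (1 - r) := by
  have ha : ‖a‖ < 1 := har.trans_lt hr
  have hxa : 1 - r ≤ ‖x + a‖ := by linarith [one_sub_norm_le_norm_add hx a]
  have hsq : 1 - r ≤ 1 - ‖a‖ ^ 2 := by nlinarith [norm_nonneg a]
  have h1r : 0 < 1 - r := by linarith
  have hxa0 : 0 < ‖x + a‖ := h1r.trans_le hxa
  calc ‖mobiusPotentialGrad a x‖
      ≤ 2 / ‖x + a‖ ^ 2 * ‖x + a‖ + 2 / (1 - ‖a‖ ^ 2) * ‖a‖ := by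
        refine (norm_add_le _ _).trans_eq ?_
        rw [norm_smul, norm_smul, Real.norm_of_nonneg (by positivity),
          Real.norm_of_nonneg (div_nonneg zero_le_two (one_sub_norm_sq_pos ha).le)]
    _ ≤ 2 / (1 - r) + 2 / (1 - r) := by
        gcongr ?_ + ?_
        · rw [sq, ← div_div, div_mul_cancel₀ _ hxa0.ne']
          gcongr
        · calc 2 / (1 - ‖a‖ ^ 2) * ‖a‖ ≤ 2 / (1 - ‖a‖ ^ 2) * 1 := by
                gcongr
                exact div_nonneg zero_le_two (one_sub_norm_sq_pos ha).le
            _ ≤ 2 / (1 - r) := by rw [mul_one]; gcongr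
    _ = 4 / (1 - r) := by ring

end NormedSpace

section InnerProductSpace

variable {E : Type*} [NormedAddCommGroup E] [InnerProductSpace ℝ E]

theorem hasFDerivAt_mobiusPotential {x a : E} (hxa : x + a ≠ 0) (ha : ‖a‖ < 1) :
    HasFDerivAt (mobiusPotential · x) (innerSL ℝ (mobiusPotentialGrad a x)) a := by
  have hnum : HasFDerivAt (fun a => Real.log (‖x + a‖ ^ 2))
      ((‖x + a‖ ^ 2)⁻¹ • 2 • innerSL ℝ (x + a)) a := by
    have := ((hasFDerivAt_id a).const_add x).norm_sq.log (by positivity)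
    simpa using this
  have hden : HasFDerivAt (fun a => Real.log (1 - ‖a‖ ^ 2))
      ((1 - ‖a‖ ^ 2)⁻¹ • -((2 : ℕ) • innerSL ℝ a)) a := by
    have := ((hasFDerivAt_id a).norm_sq.const_sub 1).log (one_sub_norm_sq_pos ha).ne'
    simpa using this
  refine (hnum.sub hden).congr_fderiv (ContinuousLinearMap.ext fun v => ?_)
  simp only [mobiusPotentialGrad, sub_apply, smul_apply, neg_apply, innerSL_apply_apply,
    inner_add_left, real_inner_smul_left, smul_eq_mul, nsmul_eq_mul]
  ring

end InnerProductSpace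

section Energy

variable {E : Type*} [NormedAddCommGroup E] [InnerProductSpace ℝ E] [FiniteDimensional ℝ E]
  [MeasurableSpace E] [BorelSpace E] (μ : Measure (sphere (0 : E) 1)) [IsFiniteMeasure μ]

noncomputable def mobiusEnergy (a : E) : ℝ :=
  ∫ x, mobiusPotential a (x : E) ∂μ

theorem hasFDerivAt_mobiusEnergy {a : E} (ha : ‖a‖ < 1) :
    HasFDerivAt (mobiusEnergy μ) (innerSL ℝ (∫ x, mobiusPotentialGrad a (x : E) ∂μ)) a := by
  set r := (1 + ‖a‖) / 2 with hr_def
  have hr : r < 1 := by linarith [hr_def]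
  have hball : ∀ a' ∈ ball a ((1 - ‖a‖) / 2), ‖a'‖ ≤ r := fun a' ha' => by
    have := norm_le_norm_add_norm_sub' a' a
    rw [mem_ball, dist_eq_norm] at ha'
    linarith [hr_def]
  have hderiv := hasFDerivAt_integral_of_dominated_of_fderiv_le (μ := μ)
    (F := fun a (x : sphere (0 : E) 1) => mobiusPotential a (x : E))
    (F' := fun a x => innerSL ℝ (mobiusPotentialGrad a (x : E)))
    (bound := fun _ => 4 / (1 - r)) (ball_mem_nhds a (ε := (1 - ‖a‖) / 2) (by linarith))
    (Eventually.of_forall fun a' => ?_)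
    ((continuous_mobiusPotential ha).integrable_of_hasCompactSupport (.of_compactSpace _))
    ((innerSL ℝ).continuous.comp (continuous_mobiusPotentialGrad ha)).aestronglyMeasurable
    (Eventually.of_forall fun x a' ha' => ?_) (integrable_const _)
    (Eventually.of_forall fun x a' ha' => ?_)
  · exact hderiv.congr_fderiv ((innerSL ℝ).integral_comp_comm
      ((continuous_mobiusPotentialGrad ha).integrable_of_hasCompactSupport (.of_compactSpace _)))
  · exact (by unfold mobiusPotential; fun_prop :
      Measurable fun x : sphere (0 : E) 1 => mobiusPotential a' (x : E)).aestronglyMeasurable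
  · rw [innerSL_apply_norm]
    exact norm_mobiusPotentialGrad_le (norm_eq_of_mem_sphere x) (hball a' ha') hr
  · have ha'1 : ‖a'‖ < 1 := (hball a' ha').trans_lt hr
    exact hasFDerivAt_mobiusPotential
      (norm_pos_iff.1 (norm_add_pos_of_norm_eq_one (norm_eq_of_mem_sphere x) ha'1)) ha'1

theorem le_mobiusEnergy_of_measureReal_cap_le {b : E} {ρ : ℝ} (hρ : 0 < ρ) (hρ2 : ρ ≤ 2)
    (hcap : μ.real {x | ‖(x : E) + b‖ ≤ ρ} ≤ μ.real univ / 4) {a : E} (hab : ‖a - b‖ ≤ ρ / 2)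
    (ha : ‖a‖ < 1) :
    -(μ.real univ / 2) * Real.log (1 - ‖a‖) + μ.real univ * (2 * Real.log (ρ / 2) - Real.log 2)
      ≤ mobiusEnergy μ a := by
  set A := {x : sphere (0 : E) 1 | ‖(x : E) + b‖ ≤ ρ}
  set L := Real.log (1 - ‖a‖ ^ 2)
  have hA : MeasurableSet A := (isClosed_le (by fun_prop) continuous_const).measurableSet
  have hint : Integrable (fun x : sphere (0 : E) 1 => mobiusPotential a x) μ :=
    (continuous_mobiusPotential ha).integrable_of_hasCompactSupport (.of_compactSpace _)
  have h1a : 0 < 1 - ‖a‖ := by linarith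
  have hin : (2 * Real.log (1 - ‖a‖) - L) * μ.real A ≤ ∫ x in A, mobiusPotential a x ∂μ :=
    setIntegral_ge_of_const_le_real hA (measure_ne_top _ _)
      (fun x _ => two_mul_log_sub_le_mobiusPotential h1a
        (one_sub_norm_le_norm_add (norm_eq_of_mem_sphere x) a))
      hint.integrableOn
  -- off the cap, `x + a = (x + b) + (a - b)` stays at distance `ρ / 2` from the origin
  have hout : (2 * Real.log (ρ / 2) - L) * μ.real Aᶜ ≤ ∫ x in Aᶜ, mobiusPotential a x ∂μ :=
    setIntegral_ge_of_const_le_real hA.compl (measure_ne_top _ _)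
      (fun x hx => two_mul_log_sub_le_mobiusPotential (by positivity) (by
        have := norm_sub_le_norm_add ((x : E) + b) (a - b)
        rw [add_add_sub_cancel] at this
        linarith [not_le.1 (show ¬‖(x : E) + b‖ ≤ ρ from hx)])) hint.integrableOn
  have hL : L ≤ Real.log (1 - ‖a‖) + Real.log 2 := by
    rw [← Real.log_mul h1a.ne' two_ne_zero]
    exact Real.log_le_log (one_sub_norm_sq_pos ha) (by nlinarith [norm_nonneg a])
  have hl : Real.log (1 - ‖a‖) ≤ 0 := Real.log_nonpos h1a.le (by linarith [norm_nonneg a])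
  have hp : Real.log (ρ / 2) ≤ 0 := Real.log_nonpos (by positivity) (by linarith)
  have hM := measureReal_add_measureReal_compl (μ := μ) hA
  have hAc : μ.real Aᶜ ≤ μ.real univ := by linarith [measureReal_nonneg (μ := μ) (s := A)]
  have h1 := mul_le_mul_of_nonpos_left hcap hl
  have h2 := mul_le_mul_of_nonpos_left hAc hp
  have h3 := mul_le_mul_of_nonneg_left hL (measureReal_nonneg (μ := μ) (s := univ))
  have h4 : L * μ.real A + L * μ.real Aᶜ = L * μ.real univ := by rw [← mul_add, hM]
  rw [mobiusEnergy, ← integral_add_compl hA hint]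
  linarith

theorem tendsto_mobiusEnergy_atTop (hμ : μ ≠ 0) (hatom : ∀ x, μ {x} = 0) {b : E} (hb : ‖b‖ = 1) :
    Tendsto (mobiusEnergy μ) (𝓝[ball 0 1] b) atTop := by
  set M := μ.real univ
  have hM : 0 < M :=
    ENNReal.toReal_pos (Measure.measure_univ_ne_zero.2 hμ) (measure_ne_top _ _)
  have hb' : -b ∈ sphere (0 : E) 1 := by simpa using hb
  obtain ⟨ρ, hρ, hcap⟩ := exists_measure_closedBall_lt μ (hatom ⟨-b, hb'⟩)
    (ENNReal.ofReal_pos.2 (by positivity : 0 < M / 4))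
  set ρ' := min ρ 2
  have hcap' : μ.real {x : sphere (0 : E) 1 | ‖(x : E) + b‖ ≤ ρ'} ≤ M / 4 := by
    refine ENNReal.toReal_le_of_le_ofReal (by positivity)
      ((measure_mono fun x hx => ?_).trans hcap.le)
    rw [mem_closedBall, Subtype.dist_eq, dist_eq_norm, sub_neg_eq_add]
    exact hx.trans (min_le_left _ _)
  have hgap : Tendsto (fun a : E => 1 - ‖a‖) (𝓝[ball 0 1] b) (𝓝[>] 0) :=
    tendsto_nhdsWithin_iff.2 ⟨((continuous_const.sub continuous_norm).tendsto' b 0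
      (by simp [hb])).mono_left nhdsWithin_le_nhds,
      eventually_nhdsWithin_of_forall fun a ha => sub_pos.2 (mem_ball_zero_iff.1 ha)⟩
  have hlow : Tendsto (fun a : E => -(M / 2) * Real.log (1 - ‖a‖) +
      M * (2 * Real.log (ρ' / 2) - Real.log 2)) (𝓝[ball 0 1] b) atTop :=
    tendsto_atTop_add_const_right _ _
      ((Real.tendsto_log_nhdsGT_zero.comp hgap).const_mul_atBot_of_neg (by linarith))
  refine tendsto_atTop_mono' _ ?_ hlow
  have hnear : ∀ᶠ a in 𝓝 b, ‖a - b‖ ≤ ρ' / 2 := by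
    filter_upwards [closedBall_mem_nhds b (by positivity : 0 < ρ' / 2)] with a ha
    rwa [mem_closedBall, dist_eq_norm] at ha
  filter_upwards [nhdsWithin_le_nhds hnear, self_mem_nhdsWithin] with a hab ha
  exact le_mobiusEnergy_of_measureReal_cap_le μ (lt_min hρ two_pos) (min_le_right _ _) hcap' hab
    (mem_ball_zero_iff.1 ha)

theorem exists_integral_mobiusPotentialGrad_eq_zero (hμ : μ ≠ 0) (hatom : ∀ x, μ {x} = 0) :
    ∃ a ∈ ball (0 : E) 1, ∫ x, mobiusPotentialGrad a (x : E) ∂μ = 0 := by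
  have hcont : ContinuousOn (mobiusEnergy μ) (ball 0 1) := fun a ha =>
    (hasFDerivAt_mobiusEnergy μ (mem_ball_zero_iff.1 ha)).continuousAt.continuousWithinAt
  obtain ⟨a, ha, hmin⟩ := isOpen_ball.exists_isLocalMin_of_tendsto_atTop
    (by rw [closure_ball _ one_ne_zero]; exact isCompact_closedBall _ _)
    ⟨0, mem_ball_self one_pos⟩ hcont (by
      rw [frontier_ball _ one_ne_zero]
      exact fun b hb => tendsto_mobiusEnergy_atTop μ hμ hatom (by simpa using hb))
  refine ⟨a, ha, ?_⟩
  rw [← norm_eq_zero, ← innerSL_apply_norm ℝ,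
    hmin.hasFDerivAt_eq_zero (hasFDerivAt_mobiusEnergy μ (mem_ball_zero_iff.1 ha)), norm_zero]

end Energy

theorem mobiusPotentialGrad_eq_smul_mobius {n : ℕ} {a x : EuclideanSpace ℝ (Fin (n + 1))}
    (hx : ‖x‖ = 1) (ha : ‖a‖ < 1) :
    mobiusPotentialGrad a x = (2 / (1 - ‖a‖ ^ 2)) • mobius a x := by
  have hN : ‖x + a‖ ^ 2 = 1 + 2 * ⟪x, a⟫ + ‖a‖ ^ 2 := by rw [norm_add_sq_real, hx]; ring
  have hN0 : ‖x + a‖ ^ 2 ≠ 0 := (pow_pos (norm_add_pos_of_norm_eq_one hx ha) 2).ne'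
  have hs0 : 1 - ‖a‖ ^ 2 ≠ 0 := (one_sub_norm_sq_pos ha).ne'
  simp only [mobiusPotentialGrad, mobius]
  match_scalars
  · field_simp
  · field_simp
    rw [div_add_one hN0, div_left_inj' hN0]
    linear_combination hN

theorem balancing_lemma_general (n : ℕ)
    (μ : MeasureTheory.Measure (Metric.sphere (0 : EuclideanSpace ℝ (Fin (n + 1))) 1))
    [MeasureTheory.IsFiniteMeasure μ] (hμ : μ ≠ 0)
    (hatomless : ∀ x : Metric.sphere (0 : EuclideanSpace ℝ (Fin (n + 1))) 1, μ {x} = 0) :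
    ∃ a ∈ Metric.ball (0 : EuclideanSpace ℝ (Fin (n + 1))) 1,
      ∫ x : Metric.sphere (0 : EuclideanSpace ℝ (Fin (n + 1))) 1,
        mobius a (x : EuclideanSpace ℝ (Fin (n + 1))) ∂μ = 0 := by
  obtain ⟨a, ha, hgrad⟩ := exists_integral_mobiusPotentialGrad_eq_zero μ hμ hatomless
  have ha1 : ‖a‖ < 1 := mem_ball_zero_iff.1 ha
  simp_rw [mobiusPotentialGrad_eq_smul_mobius (norm_eq_of_mem_sphere _) ha1, integral_smul,
    smul_eq_zero] at hgrad
  exact ⟨a, ha, hgrad.resolve_left (div_pos two_pos (one_sub_norm_sq_pos ha1)).ne'⟩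

/-- Hersch–Yang–Yau balancing lemma, measure-theoretic form: if `μ` is a nonzero finite
atomless Borel measure on the unit sphere `S^n ⊂ ℝ^{n+1}`, `n ≥ 1`, then there is a point
`a` of the open unit ball such that `∫_{S^n} T_a(x) dμ(x) = 0`. -/
theorem balancing_lemma (n : ℕ) (hn : 1 ≤ n)
    (μ : MeasureTheory.Measure (Metric.sphere (0 : EuclideanSpace ℝ (Fin (n + 1))) 1))
    [MeasureTheory.IsFiniteMeasure μ] (hμ : μ ≠ 0)
    (hatomless : ∀ x : Metric.sphere (0 : EuclideanSpace ℝ (Fin (n + 1))) 1, μ {x} = 0) :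
    ∃ a ∈ Metric.ball (0 : EuclideanSpace ℝ (Fin (n + 1))) 1,
      ∫ x : Metric.sphere (0 : EuclideanSpace ℝ (Fin (n + 1))) 1,
        mobius a (x : EuclideanSpace ℝ (Fin (n + 1))) ∂μ = 0 :=
  balancing_lemma_general n μ hμ hatomless
end

section
/- Let r ∈ (0, π/8), t ∈ (-π/4, π/4), and let a, b be real numbers satisfying: |a| ≤ r, b ≤ 1, a ≥ 0 if t ≥ 0, and a ≤ 0 if t ≤ 0. Then the following three quantities are nonnegative: (1) 2(1-b) + 2·(sin(2t)/cos(2t))·a ≥ 0; (2) (1+sin(2t))·(2 - b + 2·(sin(2t)/cos(2t))·a - a²) - a·cos(2t) ≥ 0; (3) (1-sin(2t))·(2 - b + 2·(sin(2t)/cos(2t))·a - a²) + a·cos(2t) ≥ 0. -/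
open Real

set_option maxHeartbeats 1000000 in
/-- The pointwise inequalities showing nonnegativity of the Ricci curvature of the
conformally perturbed metric `e^{2φ}g` on `S³`: for `r ∈ (0, π/8)`, `t ∈ (-π/4, π/4)`
and real numbers `a, b` with `|a| ≤ r`, `b ≤ 1`, `a ≥ 0` if `t ≥ 0` and `a ≤ 0` if
`t ≤ 0`, the three diagonal components of the Ricci tensor are nonnegative. -/
theorem ricci_components_nonneg (r t a b : ℝ) (hr : r ∈ Set.Ioo 0 (π / 8))
    (ht : t ∈ Set.Ioo (-(π / 4)) (π / 4)) (ha : |a| ≤ r) (hb : b ≤ 1)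
    (ha_pos : 0 ≤ t → 0 ≤ a) (ha_neg : t ≤ 0 → a ≤ 0) :
    0 ≤ 2 * (1 - b) + 2 * (Real.sin (2 * t) / Real.cos (2 * t)) * a ∧
    0 ≤ (1 + Real.sin (2 * t)) *
          (2 - b + 2 * (Real.sin (2 * t) / Real.cos (2 * t)) * a - a ^ 2) -
        a * Real.cos (2 * t) ∧
    0 ≤ (1 - Real.sin (2 * t)) *
          (2 - b + 2 * (Real.sin (2 * t) / Real.cos (2 * t)) * a - a ^ 2) +
        a * Real.cos (2 * t) := by
  obtain ⟨hr0, hr8⟩ := hr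
  obtain ⟨ht1, ht2⟩ := ht
  have hpi := Real.pi_lt_d2
  have hpi0 := Real.pi_pos
  have hc : 0 < Real.cos (2 * t) :=
    Real.cos_pos_of_mem_Ioo ⟨by linarith, by linarith⟩
  have hc1 : Real.cos (2 * t) ≤ 1 := Real.cos_le_one _
  have hsle : Real.sin (2 * t) ≤ 1 := Real.sin_le_one _
  have hsge : -1 ≤ Real.sin (2 * t) := Real.neg_one_le_sin _
  have hr12 : r < 1 / 2 := by linarith
  have haa := abs_le.mp ha
  have ha2 : a ^ 2 < 1 / 4 := by nlinarith [sq_abs a, abs_nonneg a]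
  have hsa : 0 ≤ Real.sin (2 * t) * a := by
    rcases le_total t 0 with h | h
    · have hs : Real.sin (2 * t) ≤ 0 :=
        Real.sin_nonpos_of_nonpos_of_neg_pi_le (by linarith) (by linarith)
      have := mul_nonneg (neg_nonneg.mpr hs) (neg_nonneg.mpr (ha_neg h))
      nlinarith
    · have hs : 0 ≤ Real.sin (2 * t) :=
        Real.sin_nonneg_of_nonneg_of_le_pi (by linarith) (by linarith)
      exact mul_nonneg hs (ha_pos h)
  have hX : 0 ≤ 2 * (Real.sin (2 * t) / Real.cos (2 * t)) * a := by
    have h := div_nonneg hsa hc.le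
    have e : 2 * (Real.sin (2 * t) / Real.cos (2 * t)) * a
        = 2 * (Real.sin (2 * t) * a / Real.cos (2 * t)) := by ring
    rw [e]; linarith
  have h2 : 3 / 4 ≤ 2 - b + 2 * (Real.sin (2 * t) / Real.cos (2 * t)) * a - a ^ 2 := by
    nlinarith
  have h2' : (0:ℝ) ≤ 2 - b + 2 * (Real.sin (2 * t) / Real.cos (2 * t)) * a - a ^ 2 := by
    linarith
  refine ⟨by linarith, ?_, ?_⟩
  · rcases le_total t 0 with h | h
    · have ha' := ha_neg h
      nlinarith [mul_nonneg (by linarith : (0:ℝ) ≤ 1 + Real.sin (2 * t)) h2',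
        mul_nonneg (neg_nonneg.mpr ha') hc.le]
    · have ha' := ha_pos h
      have hs : 0 ≤ Real.sin (2 * t) :=
        Real.sin_nonneg_of_nonneg_of_le_pi (by linarith) (by linarith)
      nlinarith [mul_nonneg hs h2', mul_le_of_le_one_right ha' hc1]
  · rcases le_total t 0 with h | h
    · have ha' := ha_neg h
      have hs : Real.sin (2 * t) ≤ 0 :=
        Real.sin_nonpos_of_nonpos_of_neg_pi_le (by linarith) (by linarith)
      nlinarith [mul_nonneg (by linarith : (0:ℝ) ≤ -Real.sin (2 * t)) h2',
        mul_le_of_le_one_right (neg_nonneg.mpr ha') hc1]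
    · have ha' := ha_pos h
      nlinarith [mul_nonneg (by linarith : (0:ℝ) ≤ 1 - Real.sin (2 * t)) h2',
        mul_nonneg ha' hc.le]
end
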